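/- arXiv:1807.04457 — 3 statements merged into one kernel-verified Lean document; each statement's English description precedes it below -/
import Mathlib

section
/- Let g_β(θ) = E_u[g(θ + βu)] be the Gaussian smoothing of g, where u is a standard Gaussian in R^d. If g has L-Lipschitz gradient, then for every θ, ||∇g(θ)||^2 ≤ 2·||∇g_β(θ)||^2 + (β^2 L^2 (d+4)^2)/2. -/
open MeasureTheory ProbabilityTheory RealInnerProductSpace

/-- The standard Gaussian measure on `EuclideanSpace ℝ (Fin d)`. -/
noncomputable def stdGaussian (d : ℕ) : Measure (EuclideanSpace ℝ (Fin d)) :=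
  (Measure.pi fun _ : Fin d => gaussianReal 0 1).map
    (EuclideanSpace.equiv (Fin d) ℝ).symm

/-- Gaussian smoothing `g_β(θ) = E_u[g(θ + βu)]`. -/
noncomputable def gaussSmooth {d : ℕ} (g : EuclideanSpace ℝ (Fin d) → ℝ) (β : ℝ)
    (θ : EuclideanSpace ℝ (Fin d)) : ℝ :=
  ∫ u, g (θ + β • u) ∂(stdGaussian d)

/-!
Differentiating under the integral sign, `∇g_β(θ) = E[∇g(θ + βu)]`, so the Lipschitz bound on
`∇g` gives `‖∇g(θ) - ∇g_β(θ)‖ ≤ L |β| E‖u‖ ≤ L |β| (d + 1) / 2`, because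
`E‖u‖ ≤ (E‖u‖² + 1) / 2` and `E‖u‖² = d`. It remains to use `‖a‖² ≤ 2‖b‖² + 2‖a - b‖²`.
-/

open Module
open scoped NNReal

section GaussianMoments

variable {E : Type*} [NormedAddCommGroup E] [InnerProductSpace ℝ E] [FiniteDimensional ℝ E]
  [MeasurableSpace E] [BorelSpace E]

lemma integral_norm_sq_stdGaussian : ∫ x, ‖x‖ ^ 2 ∂(stdGaussian E) = finrank ℝ E := by
  let b := stdOrthonormalBasis ℝ E
  have hcoord (i : Fin (finrank ℝ E)) : ∫ x, ⟪b i, x⟫ ^ 2 ∂(stdGaussian E) = 1 := by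
    have h := variance_of_integral_eq_zero (by fun_prop) (integral_strongDual_stdGaussian
      (innerSL ℝ (b i)))
    rw [variance_dual_stdGaussian, innerSL_apply_norm, b.orthonormal.1 i, one_pow] at h
    simpa only [innerSL_apply_apply] using h.symm
  simp_rw [← b.sum_sq_inner_right]
  rw [integral_finsetSum _ fun i _ => ?_]
  · simp [hcoord]
  · exact (IsGaussian.memLp_two_id.const_inner (b i)).integrable_sq

lemma integral_norm_stdGaussian_le : ∫ x, ‖x‖ ∂(stdGaussian E) ≤ (finrank ℝ E + 1) / 2 := by
  have hsq : Integrable (fun x : E => ‖x‖ ^ 2) (stdGaussian E) :=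
    IsGaussian.memLp_two_id.integrable_norm_pow two_ne_zero
  calc ∫ x, ‖x‖ ∂(stdGaussian E) ≤ ∫ x, (‖x‖ ^ 2 + 1) / 2 ∂(stdGaussian E) :=
        integral_mono IsGaussian.integrable_id.norm ((hsq.add (integrable_const 1)).div_const 2)
          fun x => by nlinarith [sq_nonneg (‖x‖ - 1)]
    _ = (finrank ℝ E + 1) / 2 := by
        rw [integral_div, integral_add hsq (integrable_const 1), integral_norm_sq_stdGaussian,
          integral_const, probReal_univ, one_smul]

end GaussianMoments

lemma LipschitzWith.norm_le_norm_add_mul {E F : Type*} [SeminormedAddCommGroup E]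
    [SeminormedAddCommGroup F] {K : ℝ≥0} {g : E → F} (hg : LipschitzWith K g) (x y : E) :
    ‖g y‖ ≤ ‖g x‖ + K * ‖y - x‖ :=
  norm_le_norm_add_const_of_dist_le (dist_eq_norm y x ▸ hg.dist_le_mul y x)

section LipschitzAverage

variable {E G : Type*} [NormedAddCommGroup E] [NormedSpace ℝ E] [MeasurableSpace E]
  [BorelSpace E] [SecondCountableTopology E] [NormedAddCommGroup G]
  {h : E → G} {K : ℝ≥0} {μ : Measure E}

lemma LipschitzWith.integrable_comp_add_smul [IsFiniteMeasure μ] (hh : LipschitzWith K h)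
    (hμ : Integrable id μ) (x : E) (β : ℝ) :
    Integrable (fun u => h (x + β • u)) μ := by
  refine Integrable.mono' (g := fun u => ‖h x‖ + K * |β| * ‖u‖)
    ((integrable_const _).add (hμ.norm.const_mul _))
    (hh.continuous.comp (by fun_prop)).aestronglyMeasurable (.of_forall fun u => ?_)
  have := hh.norm_le_norm_add_mul x (x + β • u)
  rwa [add_sub_cancel_left, norm_smul, Real.norm_eq_abs, ← mul_assoc] at this

variable [NormedSpace ℝ G] [CompleteSpace G]

lemma LipschitzWith.norm_sub_integral_comp_add_smul_le [IsProbabilityMeasure μ]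
    (hh : LipschitzWith K h) (hμ : Integrable id μ) (x : E) (β : ℝ) :
    ‖h x - ∫ u, h (x + β • u) ∂μ‖ ≤ K * |β| * ∫ u, ‖u‖ ∂μ := by
  have hconst : ∫ _u, h x ∂μ = h x := by simp
  rw [← integral_const_mul, ← hconst, ← integral_sub (integrable_const _)
      (hh.integrable_comp_add_smul hμ x β)]
  refine norm_integral_le_of_norm_le (hμ.norm.const_mul _) (.of_forall fun u => ?_)
  have := hh.norm_sub_le x (x + β • u)
  rwa [sub_add_cancel_left, norm_neg, norm_smul, Real.norm_eq_abs, ← mul_assoc] at this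

end LipschitzAverage

section Smoothing

variable {E F : Type*} [NormedAddCommGroup E] [NormedSpace ℝ E]
  [NormedAddCommGroup F] [NormedSpace ℝ F]
  {f : E → F} {f' : E → E →L[ℝ] F} {K : ℝ≥0}

lemma norm_sub_le_of_lipschitzWith_fderiv (hf : ∀ x, HasFDerivAt f (f' x) x)
    (hf' : LipschitzWith K f') (x y : E) :
    ‖f y - f x‖ ≤ (‖f' x‖ + K * ‖y - x‖) * ‖y - x‖ := by
  refine (convex_closedBall x ‖y - x‖).norm_image_sub_le_of_norm_hasFDerivWithin_le
    (fun z _ => (hf z).hasFDerivWithinAt) (fun z hz => ?_)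
    (Metric.mem_closedBall_self (norm_nonneg _)) (by simp [dist_eq_norm])
  rw [Metric.mem_closedBall, dist_eq_norm] at hz
  have := hf'.norm_le_norm_add_mul x z
  have : (K : ℝ) * ‖z - x‖ ≤ K * ‖y - x‖ := by gcongr
  linarith

variable [MeasurableSpace E] [BorelSpace E] [SecondCountableTopology E]
  {μ : Measure E}

lemma integrable_comp_add_smul_of_lipschitzWith_fderiv [IsFiniteMeasure μ] (hf : ∀ x, HasFDerivAt f (f' x) x)
    (hf' : LipschitzWith K f') (hμ : MemLp id 2 μ) (x : E) (β : ℝ) :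
    Integrable (fun u => f (x + β • u)) μ := by
  have hcont : Continuous f := continuous_iff_continuousAt.2 fun x => (hf x).continuousAt
  refine Integrable.mono'
    (g := fun u => ‖f x‖ + ‖f' x‖ * |β| * ‖u‖ + K * β ^ 2 * ‖u‖ ^ 2)
    (((integrable_const _).add ((hμ.integrable one_le_two).norm.const_mul _)).add
      ((hμ.integrable_norm_pow two_ne_zero).const_mul _))
    (by fun_prop) (.of_forall fun u => ?_)
  have hgrowth := norm_sub_le_of_lipschitzWith_fderiv hf hf' x (x + β • u)
  rw [add_sub_cancel_left, norm_smul, Real.norm_eq_abs] at hgrowth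
  have := norm_le_norm_add_norm_sub' (f (x + β • u)) (f x)
  have : (‖f' x‖ + K * (|β| * ‖u‖)) * (|β| * ‖u‖)
      = ‖f' x‖ * |β| * ‖u‖ + K * β ^ 2 * ‖u‖ ^ 2 := by rw [← sq_abs β]; ring
  linarith

lemma hasFDerivAt_integral_comp_add_smul [IsFiniteMeasure μ] [CompleteSpace F]
    (hf : ∀ x, HasFDerivAt f (f' x) x) (hf' : LipschitzWith K f') (hμ : MemLp id 2 μ)
    (x₀ : E) (β : ℝ) :
    HasFDerivAt (fun x => ∫ u, f (x + β • u) ∂μ) (∫ u, f' (x₀ + β • u) ∂μ) x₀ := by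
  have hcont : Continuous f := continuous_iff_continuousAt.2 fun x => (hf x).continuousAt
  refine hasFDerivAt_integral_of_dominated_of_fderiv_le (F' := fun x u => f' (x + β • u))
    (bound := fun u => ‖f' x₀‖ + K * (1 + |β| * ‖u‖)) (Metric.ball_mem_nhds x₀ one_pos)
    (.of_forall fun x => (hcont.comp (by fun_prop)).aestronglyMeasurable)
    (integrable_comp_add_smul_of_lipschitzWith_fderiv hf hf' hμ x₀ β)
    (hf'.continuous.comp (by fun_prop)).aestronglyMeasurable (.of_forall fun u x hx => ?_)
    ((integrable_const _).add
      (((integrable_const 1).add ((hμ.integrable one_le_two).norm.const_mul _)).const_mul _))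
    (.of_forall fun u x _ => ?_)
  · rw [Metric.mem_ball, dist_eq_norm] at hx
    have hshift : ‖x + β • u - x₀‖ ≤ 1 + |β| * ‖u‖ := by
      rw [add_sub_right_comm, ← Real.norm_eq_abs, ← norm_smul]
      exact (norm_add_le _ _).trans (by gcongr)
    have := hf'.norm_le_norm_add_mul x₀ (x + β • u)
    have : (K : ℝ) * ‖x + β • u - x₀‖ ≤ K * (1 + |β| * ‖u‖) := by gcongr
    linarith
  · exact (hf (x + β • u)).comp x ((hasFDerivAt_id x).add_const (β • u))

end Smoothing

lemma gaussSmooth_eq_integral_stdGaussian {d : ℕ} (g : EuclideanSpace ℝ (Fin d) → ℝ) (β : ℝ) :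
    gaussSmooth g β = fun θ => ∫ u, g (θ + β • u) ∂(stdGaussian (EuclideanSpace ℝ (Fin d))) := by
  ext θ
  rw [gaussSmooth, ← map_pi_eq_stdGaussian]
  rfl

section GaussSmooth

variable {d : ℕ} {g : EuclideanSpace ℝ (Fin d) → ℝ}
  {g' : EuclideanSpace ℝ (Fin d) → EuclideanSpace ℝ (Fin d)} {K : ℝ≥0}

lemma hasGradientAt_gaussSmooth (hg : ∀ x, HasGradientAt g (g' x) x) (hg' : LipschitzWith K g')
    (β : ℝ) (θ : EuclideanSpace ℝ (Fin d)) :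
    HasGradientAt (gaussSmooth g β)
      (∫ u, g' (θ + β • u) ∂(stdGaussian (EuclideanSpace ℝ (Fin d)))) θ := by
  rw [hasGradientAt_iff_hasFDerivAt, gaussSmooth_eq_integral_stdGaussian]
  set D := InnerProductSpace.toDual ℝ (EuclideanSpace ℝ (Fin d))
  have hDg' : LipschitzWith K (D ∘ g') := by rwa [D.isometry.lipschitzWith_iff]
  have hcomm : ∫ u, D (g' (θ + β • u)) ∂(stdGaussian (EuclideanSpace ℝ (Fin d)))
      = D (∫ u, g' (θ + β • u) ∂(stdGaussian (EuclideanSpace ℝ (Fin d)))) :=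
    D.toLinearIsometry.integral_comp_comm _
  rw [← hcomm]
  exact hasFDerivAt_integral_comp_add_smul (fun x => (hg x).hasFDerivAt) hDg'
    IsGaussian.memLp_two_id θ β

lemma norm_sub_integral_comp_add_smul_stdGaussian_le (hg' : LipschitzWith K g') (β : ℝ)
    (θ : EuclideanSpace ℝ (Fin d)) :
    ‖g' θ - ∫ u, g' (θ + β • u) ∂(stdGaussian (EuclideanSpace ℝ (Fin d)))‖
      ≤ K * |β| * ((d + 1) / 2) := by
  refine (hg'.norm_sub_integral_comp_add_smul_le IsGaussian.integrable_id θ β).trans ?_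
  have := integral_norm_stdGaussian_le (E := EuclideanSpace ℝ (Fin d))
  rw [finrank_euclideanSpace_fin] at this
  gcongr

end GaussSmooth

theorem grad_le_grad_smooth_general {d : ℕ}
    (g : EuclideanSpace ℝ (Fin d) → ℝ)
    (g' : EuclideanSpace ℝ (Fin d) → EuclideanSpace ℝ (Fin d)) (L β : ℝ)
    (hg : ∀ x, HasGradientAt g (g' x) x)
    (hlip : ∀ x y, ‖g' x - g' y‖ ≤ L * ‖x - y‖)
    (θ : EuclideanSpace ℝ (Fin d)) :
    ‖g' θ‖ ^ 2 ≤ 2 * ‖gradient (gaussSmooth g β) θ‖ ^ 2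
      + β ^ 2 * L ^ 2 * ((d : ℝ) + 4) ^ 2 / 2 := by
  have hg' : LipschitzWith ‖L‖₊ g' := LipschitzWith.of_dist_le_mul fun x y => by
    rw [dist_eq_norm, dist_eq_norm, coe_nnnorm, Real.norm_eq_abs]
    exact (hlip x y).trans (by gcongr; exact le_abs_self L)
  have hclose := norm_sub_integral_comp_add_smul_stdGaussian_le hg' β θ
  rw [(hasGradientAt_gaussSmooth hg hg' β θ).gradient]
  set G := ∫ u, g' (θ + β • u) ∂(stdGaussian (EuclideanSpace ℝ (Fin d)))
  rw [coe_nnnorm, Real.norm_eq_abs] at hclose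
  calc ‖g' θ‖ ^ 2 ≤ (‖G‖ + ‖g' θ - G‖) ^ 2 := by
        gcongr; exact norm_le_norm_add_norm_sub' _ _
    _ ≤ 2 * (‖G‖ ^ 2 + ‖g' θ - G‖ ^ 2) := add_sq_le
    _ ≤ 2 * (‖G‖ ^ 2 + (|L| * |β| * ((d + 1) / 2)) ^ 2) := by gcongr
    _ ≤ 2 * ‖G‖ ^ 2 + β ^ 2 * L ^ 2 * ((d : ℝ) + 4) ^ 2 / 2 := by
        rw [mul_pow, mul_pow, sq_abs, sq_abs]
        have : ((d : ℝ) + 1) ^ 2 ≤ ((d : ℝ) + 4) ^ 2 := by gcongr; norm_num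
        nlinarith [mul_nonneg (sq_nonneg L) (sq_nonneg β)]

/-- If `g` has `L`-Lipschitz gradient, then for every `θ`,
`‖∇g(θ)‖² ≤ 2‖∇g_β(θ)‖² + β²L²(d+4)²/2`. -/
theorem grad_le_grad_smooth {d : ℕ}
    (g : EuclideanSpace ℝ (Fin d) → ℝ)
    (g' : EuclideanSpace ℝ (Fin d) → EuclideanSpace ℝ (Fin d)) (L β : ℝ)
    (hL : 0 ≤ L) (hβ : 0 < β)
    (hg : ∀ x, HasGradientAt g (g' x) x)
    (hlip : ∀ x y, ‖g' x - g' y‖ ≤ L * ‖x - y‖)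
    (θ : EuclideanSpace ℝ (Fin d)) :
    ‖g' θ‖ ^ 2 ≤ 2 * ‖gradient (gaussSmooth g β) θ‖ ^ 2
      + β ^ 2 * L ^ 2 * ((d : ℝ) + 4) ^ 2 / 2 :=
  grad_le_grad_smooth_general g g' L β hg hlip θ
end

section
/- Under ε-accurate function evaluations, the expected squared norm of the noisy RGF gradient estimator ĝ(θ) = ((g̃(θ+βu) − g̃(θ))/β)·u satisfies, with ε̂ = ε/β, E_u[||ĝ(θ)||^2] ≤ (β^2/2)L^2(d+6)^3 + 2(d+4)||∇g(θ)||^2 + 4βε̂L(d+4)^2 + 8ε̂^2 d. -/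
open MeasureTheory ProbabilityTheory RealInnerProductSpace

open Real
open scoped ENNReal NNReal

noncomputable section

/-- `I n = ∫ x^n e^{-x²/2}`. -/
def gmi (n : ℕ) : ℝ := ∫ x : ℝ, x ^ n * Real.exp (-(2⁻¹ : ℝ) * x ^ 2)

lemma integrable_gmi (n : ℕ) :
    Integrable (fun x : ℝ => x ^ n * Real.exp (-(2⁻¹ : ℝ) * x ^ 2)) := by
  have := integrable_rpow_mul_exp_neg_mul_sq (b := (2⁻¹ : ℝ)) (by norm_num)
    (s := (n : ℝ)) (lt_of_lt_of_le neg_one_lt_zero (Nat.cast_nonneg n))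
  simpa [Real.rpow_natCast] using this

lemma gmi_zero : gmi 0 = Real.sqrt (2 * π) := by
  have := integral_gaussian (2⁻¹ : ℝ)
  simpa [gmi, show π / (2⁻¹ : ℝ) = 2 * π by ring] using this

lemma gmi_one : gmi 1 = 0 := by
  have hd : ∀ x : ℝ, HasDerivAt (fun x : ℝ => -Real.exp (-(2⁻¹ : ℝ) * x ^ 2))
      (x ^ 1 * Real.exp (-(2⁻¹ : ℝ) * x ^ 2)) x := by
    intro x
    have h1 : HasDerivAt (fun x : ℝ => -(2⁻¹ : ℝ) * x ^ 2) (-(2⁻¹ : ℝ) * (2 * x)) x :=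
      ((hasDerivAt_pow 2 x).const_mul _).congr_deriv (by ring)
    have := (h1.exp).neg
    refine this.congr_deriv ?_
    ring
  have h0 := integral_eq_zero_of_hasDerivAt_of_integrable hd (integrable_gmi 1)
    ((integrable_exp_neg_mul_sq (by norm_num : (0:ℝ) < 2⁻¹)).neg)
  simpa [gmi] using h0

lemma gmi_rec (n : ℕ) : gmi (n + 2) = (n + 1) * gmi n := by
  have hd : ∀ x : ℝ, HasDerivAt (fun x : ℝ => x ^ (n + 1) * Real.exp (-(2⁻¹ : ℝ) * x ^ 2))
      (((n : ℝ) + 1) * (x ^ n * Real.exp (-(2⁻¹ : ℝ) * x ^ 2))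
        - x ^ (n + 2) * Real.exp (-(2⁻¹ : ℝ) * x ^ 2)) x := by
    intro x
    have h1 : HasDerivAt (fun x : ℝ => -(2⁻¹ : ℝ) * x ^ 2) (-(2⁻¹ : ℝ) * (2 * x)) x :=
      ((hasDerivAt_pow 2 x).const_mul _).congr_deriv (by ring)
    have h2 := (hasDerivAt_pow (n + 1) x).mul h1.exp
    refine h2.congr_deriv ?_
    push_cast
    ring
  have h0 := integral_eq_zero_of_hasDerivAt_of_integrable hd
    (Integrable.sub ((integrable_gmi n).const_mul _) (integrable_gmi (n + 2)))
    (integrable_gmi (n + 1))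
  rw [integral_sub ((integrable_gmi n).const_mul _) (integrable_gmi (n + 2)),
    integral_const_mul] at h0
  have : ((n : ℝ) + 1) * gmi n - gmi (n + 2) = 0 := h0
  linarith

/-- moments of the standard gaussian -/
def gm (n : ℕ) : ℝ := ∫ x : ℝ, x ^ n ∂(gaussianReal 0 1)

lemma gm_def (n : ℕ) : gm n = ∫ x : ℝ, x ^ n ∂(gaussianReal 0 1) := rfl

lemma gaussianReal_std_eq :
    gaussianReal 0 1 = volume.withDensity
      (fun x => ENNReal.ofReal ((Real.sqrt (2 * π))⁻¹ * Real.exp (-(2⁻¹ : ℝ) * x ^ 2))) := by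
  rw [gaussianReal_of_var_ne_zero 0 one_ne_zero]
  congr 1
  ext x
  rw [gaussianPDF_def, gaussianPDFReal_def]
  norm_num
  ring_nf

lemma integral_gaussianReal_std (f : ℝ → ℝ) :
    ∫ x, f x ∂(gaussianReal 0 1)
      = (Real.sqrt (2 * π))⁻¹ * ∫ x, f x * Real.exp (-(2⁻¹ : ℝ) * x ^ 2) := by
  rw [gaussianReal_std_eq]
  have hm : Measurable fun x : ℝ =>
      ((Real.sqrt (2 * π))⁻¹ * Real.exp (-(2⁻¹ : ℝ) * x ^ 2)).toNNReal := by
    fun_prop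
  rw [show (fun x : ℝ => ENNReal.ofReal ((Real.sqrt (2 * π))⁻¹ * Real.exp (-(2⁻¹ : ℝ) * x ^ 2)))
      = (fun x : ℝ => (((Real.sqrt (2 * π))⁻¹ * Real.exp (-(2⁻¹ : ℝ) * x ^ 2)).toNNReal : ℝ≥0∞))
      from rfl]
  rw [integral_withDensity_eq_integral_smul hm f, ← integral_const_mul]
  congr 1
  ext x
  have hnn : (0:ℝ) ≤ (Real.sqrt (2 * π))⁻¹ * Real.exp (-(2⁻¹ : ℝ) * x ^ 2) := by positivity
  rw [NNReal.smul_def, Real.coe_toNNReal _ hnn, smul_eq_mul]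
  ring

lemma integrable_pow_gaussianReal (n : ℕ) :
    Integrable (fun x : ℝ => x ^ n) (gaussianReal 0 1) := by
  rw [gaussianReal_std_eq]
  rw [show (fun x : ℝ => ENNReal.ofReal ((Real.sqrt (2 * π))⁻¹ * Real.exp (-(2⁻¹ : ℝ) * x ^ 2)))
      = (fun x : ℝ => (((Real.sqrt (2 * π))⁻¹ * Real.exp (-(2⁻¹ : ℝ) * x ^ 2)).toNNReal : ℝ≥0∞))
      from rfl]
  rw [integrable_withDensity_iff_integrable_coe_smul (by fun_prop)]
  have : Integrable (fun x : ℝ => (Real.sqrt (2 * π))⁻¹ * (x ^ n * Real.exp (-(2⁻¹ : ℝ) * x ^ 2))) :=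
    (integrable_gmi n).const_mul _
  apply this.congr
  filter_upwards with x
  have hnn : (0:ℝ) ≤ (Real.sqrt (2 * π))⁻¹ * Real.exp (-(2⁻¹ : ℝ) * x ^ 2) := by positivity
  rw [eq_comm, smul_eq_mul, Real.coe_toNNReal _ hnn]
  ring

lemma sqrt_two_pi_pos : (0:ℝ) < Real.sqrt (2 * π) := by positivity

lemma gm_eq (n : ℕ) : gm n = (Real.sqrt (2 * π))⁻¹ * gmi n := by
  rw [gm, integral_gaussianReal_std]; rfl

lemma gm_zero : gm 0 = 1 := by
  rw [gm_eq, gmi_zero, inv_mul_cancel₀ (ne_of_gt sqrt_two_pi_pos)]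

lemma gm_one : gm 1 = 0 := by rw [gm_eq, gmi_one, mul_zero]

lemma gm_rec (n : ℕ) : gm (n + 2) = (n + 1) * gm n := by
  rw [gm_eq, gm_eq, gmi_rec]; ring

lemma gm_two : gm 2 = 1 := by
  have := gm_rec 0; rw [gm_zero] at this; norm_num at this; simpa using this

lemma gm_three : gm 3 = 0 := by
  have := gm_rec 1; rw [gm_one] at this; simpa using this

lemma gm_four : gm 4 = 3 := by
  have := gm_rec 2; rw [gm_two] at this; norm_num at this; simpa using this

lemma gm_six : gm 6 = 15 := by
  have := gm_rec 4; rw [gm_four] at this; norm_num at this; simpa using this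

end

theorem pi_integrable_prod {n : ℕ} {μ : Measure ℝ} [SigmaFinite μ] {f : Fin n → ℝ → ℝ}
    (hf : ∀ i, Integrable (f i) μ) :
    Integrable (fun x : Fin n → ℝ => ∏ i, f i (x i)) (Measure.pi fun _ => μ) := by
  induction n with
  | zero =>
      simp only [Finset.univ_eq_empty, Finset.prod_empty]
      rw [integrable_const_iff]
      simp
      rw [Measure.pi_of_empty]
      infer_instance
  | succ n ih =>
      have h := ((measurePreserving_piFinSuccAbove (fun _ : Fin (n + 1) => μ) 0).symm)
      rw [← h.integrable_comp_emb (MeasurableEquiv.measurableEmbedding _)]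
      simp_rw [MeasurableEquiv.piFinSuccAbove_symm_apply, Fin.insertNthEquiv,
        Fin.prod_univ_succ, Fin.insertNth_zero]
      simp only [Fin.zero_succAbove, Function.comp_def, Fin.cons_zero, Fin.cons_succ,
        Equiv.coe_fn_mk]
      exact Integrable.mul_prod (hf 0) (ih (fun i => hf _))

theorem pi_integral_prod {n : ℕ} {μ : Measure ℝ} [SigmaFinite μ] (f : Fin n → ℝ → ℝ) :
    ∫ x : Fin n → ℝ, ∏ i, f i (x i) ∂(Measure.pi fun _ => μ) = ∏ i, ∫ x, f i x ∂μ := by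
  induction n with
  | zero => simp [Measure.real, Measure.pi_of_empty]
  | succ n ih =>
      calc
        _ = ∫ x : ℝ × (Fin n → ℝ), f 0 x.1 * ∏ i : Fin n, f i.succ (x.2 i)
            ∂(μ.prod (Measure.pi fun _ => μ)) := by
          rw [← ((measurePreserving_piFinSuccAbove (fun _ : Fin (n + 1) => μ) 0).symm).integral_comp']
          simp only [MeasurableEquiv.piFinSuccAbove_symm_apply, Fin.insertNthEquiv,
            Fin.prod_univ_succ, Fin.insertNth_zero, Equiv.coe_fn_mk, Fin.zero_succAbove,
            Fin.cons_zero, Fin.cons_succ, cast_eq]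
        _ = (∫ x, f 0 x ∂μ) * ∏ i : Fin n, ∫ x, f i.succ x ∂μ := by
          rw [← ih fun i => f i.succ, ← integral_prod_mul]
        _ = ∏ i, ∫ x, f i x ∂μ := (Fin.prod_univ_succ fun i => ∫ x, f i x ∂μ).symm

noncomputable abbrev piGauss (d : ℕ) : Measure (Fin d → ℝ) :=
  Measure.pi fun _ => gaussianReal 0 1

section Monomials
variable {d : ℕ}

lemma prod_pow_if (x : Fin d → ℝ) (i : Fin d) (a : ℕ) :
    ∏ l, x l ^ (if l = i then a else 0) = x i ^ a := by
  rw [Finset.prod_eq_single i (fun b _ hb => by simp [hb]) (by simp)]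
  simp

lemma prod_pow_if3 (x : Fin d → ℝ) (i j k : Fin d) (a b c : ℕ) :
    ∏ l, x l ^ ((if l = i then a else 0) + (if l = j then b else 0) + (if l = k then c else 0))
      = x i ^ a * x j ^ b * x k ^ c := by
  simp only [pow_add, Finset.prod_mul_distrib, prod_pow_if]

lemma integrable_mono3 (i j k : Fin d) (a b c : ℕ) :
    Integrable (fun x : Fin d → ℝ => x i ^ a * x j ^ b * x k ^ c) (piGauss d) := by
  have := pi_integrable_prod (μ := gaussianReal 0 1)
    (f := fun l t => t ^ ((if l = i then a else 0) + (if l = j then b else 0)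
      + (if l = k then c else 0))) (fun l => integrable_pow_gaussianReal _)
  simpa only [prod_pow_if3] using this

lemma integral_mono3 (i j k : Fin d) (a b c : ℕ) :
    ∫ x : Fin d → ℝ, x i ^ a * x j ^ b * x k ^ c ∂(piGauss d)
      = ∏ l, gm ((if l = i then a else 0) + (if l = j then b else 0)
          + (if l = k then c else 0)) := by
  have := pi_integral_prod (μ := gaussianReal 0 1)
    (f := fun l t => t ^ ((if l = i then a else 0) + (if l = j then b else 0)
      + (if l = k then c else 0)))
  simp only [prod_pow_if3] at this
  rw [this]
  exact Finset.prod_congr rfl fun l _ => (gm_def _).symm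

lemma prod_gm_if (i : Fin d) (a : ℕ) :
    ∏ l : Fin d, gm (if l = i then a else 0) = gm a := by
  rw [Finset.prod_eq_single i (fun b _ hb => by simp [hb, gm_zero]) (by simp)]
  simp

lemma prod_gm_if2 (i j : Fin d) (hij : i ≠ j) (a b : ℕ) :
    ∏ l : Fin d, gm ((if l = i then a else 0) + (if l = j then b else 0)) = gm a * gm b := by
  have key : ∀ l, gm ((if l = i then a else 0) + (if l = j then b else 0))
      = gm (if l = i then a else 0) * gm (if l = j then b else 0) := by
    intro l
    by_cases h1 : l = i <;> by_cases h2 : l = j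
    · exact absurd (h1 ▸ h2) hij
    all_goals simp [h1, h2, hij, Ne.symm hij, gm_zero]
  simp only [key, Finset.prod_mul_distrib, prod_gm_if]

lemma prod_gm_if3 (i j k : Fin d) (hij : i ≠ j) (hjk : j ≠ k) (hik : i ≠ k) (a b c : ℕ) :
    ∏ l : Fin d, gm ((if l = i then a else 0) + (if l = j then b else 0)
        + (if l = k then c else 0)) = gm a * gm b * gm c := by
  have key : ∀ l, gm ((if l = i then a else 0) + (if l = j then b else 0)
        + (if l = k then c else 0))
      = gm (if l = i then a else 0) * gm (if l = j then b else 0)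
        * gm (if l = k then c else 0) := by
    intro l
    by_cases h1 : l = i <;> by_cases h2 : l = j <;> by_cases h3 : l = k
    · exact absurd (h1 ▸ h2) hij
    · exact absurd (h1 ▸ h2) hij
    · exact absurd (h1 ▸ h3) hik
    all_goals simp [h1, h2, h3, hij, hjk, hik, Ne.symm hij, Ne.symm hjk, Ne.symm hik, gm_zero]
  simp only [key, Finset.prod_mul_distrib, prod_gm_if]

/-- `E[x_i² x_j²]`, encoded with a dummy third factor. -/
lemma integral_sq_sq (i j : Fin d) :
    ∫ x : Fin d → ℝ, x i ^ 2 * x j ^ 2 ∂(piGauss d)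
      = 1 + 2 * (if i = j then (1:ℝ) else 0) := by
  have h : ∫ x : Fin d → ℝ, x i ^ 2 * x j ^ 2 ∂(piGauss d)
      = ∫ x : Fin d → ℝ, x i ^ 2 * x j ^ 2 * x i ^ 0 ∂(piGauss d) := by simp
  rw [h, integral_mono3]
  by_cases hij : i = j
  · subst hij
    have : ∀ l : Fin d, ((if l = i then 2 else 0) + (if l = i then 2 else 0)
        + (if l = i then 0 else 0) : ℕ) = (if l = i then 4 else 0) := by
      intro l; by_cases h : l = i <;> simp [h]
    simp only [this, prod_gm_if, gm_four]
    norm_num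
  · have : ∀ l : Fin d, ((if l = i then 2 else 0) + (if l = j then 2 else 0)
        + (if l = i then 0 else 0) : ℕ)
        = ((if l = i then 2 else 0) + (if l = j then 2 else 0)) := by
      intro l; by_cases h : l = i <;> simp [h]
    simp only [this, prod_gm_if2 i j hij, gm_two]
    simp [hij]

/-- `E[x_i x_k x_j²]`. -/
lemma integral_lin_lin_sq (i k j : Fin d) :
    ∫ x : Fin d → ℝ, x i * x k * x j ^ 2 ∂(piGauss d)
      = if i = k then (1 + 2 * (if i = j then (1:ℝ) else 0)) else 0 := by
  have h : ∫ x : Fin d → ℝ, x i * x k * x j ^ 2 ∂(piGauss d)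
      = ∫ x : Fin d → ℝ, x i ^ 1 * x k ^ 1 * x j ^ 2 ∂(piGauss d) := by simp
  rw [h, integral_mono3]
  by_cases hik : i = k
  · subst hik
    rw [if_pos rfl]
    by_cases hij : i = j
    · subst hij
      have : ∀ l : Fin d, ((if l = i then 1 else 0) + (if l = i then 1 else 0)
          + (if l = i then 2 else 0) : ℕ) = (if l = i then 4 else 0) := by
        intro l; by_cases h : l = i <;> simp [h]
      simp only [this, prod_gm_if, gm_four]
      norm_num
    · have : ∀ l : Fin d, ((if l = i then 1 else 0) + (if l = i then 1 else 0)
          + (if l = j then 2 else 0) : ℕ)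
          = ((if l = i then 2 else 0) + (if l = j then 2 else 0)) := by
        intro l; by_cases h1 : l = i <;> by_cases h2 : l = j <;>
          simp [h1, h2, hij, Ne.symm hij]
      simp only [this, prod_gm_if2 i j hij, gm_two]
      simp [hij]
  · rw [if_neg hik]
    by_cases hij : i = j
    · subst hij
      have : ∀ l : Fin d, ((if l = i then 1 else 0) + (if l = k then 1 else 0)
          + (if l = i then 2 else 0) : ℕ)
          = ((if l = i then 3 else 0) + (if l = k then 1 else 0)) := by
        intro l; by_cases h1 : l = i <;> by_cases h2 : l = k <;> simp_all <;> omega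
      rw [Finset.prod_congr rfl fun l _ => by rw [this l]]
      rw [prod_gm_if2 i k hik, gm_three, zero_mul]
    · by_cases hkj : k = j
      · subst hkj
        have : ∀ l : Fin d, ((if l = i then 1 else 0) + (if l = k then 1 else 0)
            + (if l = k then 2 else 0) : ℕ)
            = ((if l = i then 1 else 0) + (if l = k then 3 else 0)) := by
          intro l; by_cases h1 : l = i <;> by_cases h2 : l = k <;> simp_all <;> omega
        rw [Finset.prod_congr rfl fun l _ => by rw [this l]]
        rw [prod_gm_if2 i k hik, gm_three, gm_one, zero_mul]
      · rw [prod_gm_if3 i k j hik hkj hij, gm_one]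
        ring

/-- `E[x_i² x_j² x_k²]`. -/
lemma integral_sq_sq_sq (i j k : Fin d) :
    ∫ x : Fin d → ℝ, x i ^ 2 * x j ^ 2 * x k ^ 2 ∂(piGauss d)
      = 1 + 2 * ((if i = j then (1:ℝ) else 0) + (if j = k then (1:ℝ) else 0)
          + (if i = k then (1:ℝ) else 0))
        + 8 * ((if i = j then (1:ℝ) else 0) * (if j = k then (1:ℝ) else 0)) := by
  rw [integral_mono3]
  by_cases hij : i = j
  · subst hij
    by_cases hjk : i = k
    · subst hjk
      have : ∀ l : Fin d, ((if l = i then 2 else 0) + (if l = i then 2 else 0)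
          + (if l = i then 2 else 0) : ℕ) = (if l = i then 6 else 0) := by
        intro l; by_cases h : l = i <;> simp [h]
      simp only [this, prod_gm_if, gm_six]
      norm_num
    · have : ∀ l : Fin d, ((if l = i then 2 else 0) + (if l = i then 2 else 0)
          + (if l = k then 2 else 0) : ℕ)
          = ((if l = i then 4 else 0) + (if l = k then 2 else 0)) := by
        intro l; by_cases h1 : l = i <;> by_cases h2 : l = k <;>
          simp [h1, h2, hjk, Ne.symm hjk]
      rw [Finset.prod_congr rfl fun l _ => by rw [this l], prod_gm_if2 i k hjk, gm_four, gm_two]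
      norm_num [hjk]
  · by_cases hjk : j = k
    · subst hjk
      have : ∀ l : Fin d, ((if l = i then 2 else 0) + (if l = j then 2 else 0)
          + (if l = j then 2 else 0) : ℕ)
          = ((if l = i then 2 else 0) + (if l = j then 4 else 0)) := by
        intro l; by_cases h1 : l = i <;> by_cases h2 : l = j <;>
          simp [h1, h2, hij, Ne.symm hij]
      rw [Finset.prod_congr rfl fun l _ => by rw [this l], prod_gm_if2 i j hij, gm_four, gm_two]
      norm_num [hij]
    · by_cases hik : i = k
      · subst hik
        have : ∀ l : Fin d, ((if l = i then 2 else 0) + (if l = j then 2 else 0)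
            + (if l = i then 2 else 0) : ℕ)
            = ((if l = i then 4 else 0) + (if l = j then 2 else 0)) := by
          intro l; by_cases h1 : l = i <;> by_cases h2 : l = j <;>
            simp [h1, h2, hij, Ne.symm hij]
        rw [Finset.prod_congr rfl fun l _ => by rw [this l], prod_gm_if2 i j hij, gm_four, gm_two]
        norm_num [hij, hjk]
      · rw [prod_gm_if3 i j k hij hjk hik, gm_two]
        norm_num [hij, hjk, hik]

end Monomials

lemma integral_sq_single {d : ℕ} (i : Fin d) :
    ∫ x : Fin d → ℝ, x i ^ 2 ∂(piGauss d) = 1 := by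
  have h : ∫ x : Fin d → ℝ, x i ^ 2 ∂(piGauss d)
      = ∫ x : Fin d → ℝ, x i ^ 2 * x i ^ 0 * x i ^ 0 ∂(piGauss d) := by simp
  rw [h, integral_mono3]
  have key : ∀ l : Fin d, ((if l = i then 2 else 0) + (if l = i then 0 else 0)
      + (if l = i then 0 else 0) : ℕ) = (if l = i then 2 else 0) := by
    intro l; by_cases h : l = i <;> simp [h]
  simp only [key, prod_gm_if, gm_two]

section Sums
variable {d : ℕ}

lemma integrable_sq1 (i : Fin d) : Integrable (fun x : Fin d → ℝ => x i ^ 2) (piGauss d) := by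
  simpa using integrable_mono3 i i i 2 0 0

lemma integrable_sqsum : Integrable (fun x : Fin d → ℝ => ∑ i, x i ^ 2) (piGauss d) :=
  integrable_finset_sum _ fun i _ => integrable_sq1 i

lemma integral_sqsum : ∫ x : Fin d → ℝ, ∑ i, x i ^ 2 ∂(piGauss d) = d := by
  rw [integral_finset_sum _ fun i _ => integrable_sq1 i]
  simp [integral_sq_single]

lemma sqsum_sq (x : Fin d → ℝ) :
    (∑ i, x i ^ 2) ^ 2 = ∑ i, ∑ j, x i ^ 2 * x j ^ 2 := by
  rw [sq, Finset.sum_mul_sum]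

lemma integrable_sqsum_sq : Integrable (fun x : Fin d → ℝ => (∑ i, x i ^ 2) ^ 2) (piGauss d) := by
  simp only [sqsum_sq]
  exact integrable_finset_sum _ fun i _ => integrable_finset_sum _ fun j _ => by
    simpa using integrable_mono3 i j j 2 2 0

lemma sum_one_add_two_ite {d : ℕ} (i : Fin d) :
    ∑ j : Fin d, (1 + 2 * (if i = j then (1:ℝ) else 0)) = d + 2 := by
  simp [Finset.sum_add_distrib, ← Finset.mul_sum, Finset.sum_ite_eq]

lemma integral_sqsum_sq :
    ∫ x : Fin d → ℝ, (∑ i, x i ^ 2) ^ 2 ∂(piGauss d) = d ^ 2 + 2 * d := by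
  simp only [sqsum_sq]
  rw [integral_finset_sum _ fun i _ => integrable_finset_sum _ fun j _ => by
    simpa using integrable_mono3 i j j 2 2 0]
  have this1 : ∀ i : Fin d, ∫ x : Fin d → ℝ, ∑ j, x i ^ 2 * x j ^ 2 ∂(piGauss d)
      = ((d : ℝ) + 2) := by
    intro i
    rw [integral_finset_sum _ fun j _ => by simpa using integrable_mono3 i j j 2 2 0,
      Finset.sum_congr rfl fun j _ => integral_sq_sq i j, sum_one_add_two_ite]
  rw [Finset.sum_congr rfl fun i _ => this1 i]
  simp
  ring

lemma sqsum_cube (x : Fin d → ℝ) :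
    (∑ i, x i ^ 2) ^ 3 = ∑ i, ∑ j, ∑ k, x i ^ 2 * x j ^ 2 * x k ^ 2 := by
  rw [pow_succ, sqsum_sq, Finset.sum_mul]
  refine Finset.sum_congr rfl fun i _ => ?_
  rw [Finset.sum_mul]
  refine Finset.sum_congr rfl fun j _ => ?_
  rw [Finset.mul_sum]

lemma integrable_sqsum_cube :
    Integrable (fun x : Fin d → ℝ => (∑ i, x i ^ 2) ^ 3) (piGauss d) := by
  simp only [sqsum_cube]
  exact integrable_finset_sum _ fun i _ => integrable_finset_sum _ fun j _ =>
    integrable_finset_sum _ fun k _ => integrable_mono3 i j k 2 2 2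

lemma integral_sqsum_cube :
    ∫ x : Fin d → ℝ, (∑ i, x i ^ 2) ^ 3 ∂(piGauss d) = d ^ 3 + 6 * d ^ 2 + 8 * d := by
  simp only [sqsum_cube]
  rw [integral_finset_sum _ fun i _ => integrable_finset_sum _ fun j _ =>
    integrable_finset_sum _ fun k _ => integrable_mono3 i j k 2 2 2]
  have hk : ∀ i j : Fin d, ∑ k : Fin d,
      (1 + 2 * ((if i = j then (1:ℝ) else 0) + (if j = k then (1:ℝ) else 0)
          + (if i = k then (1:ℝ) else 0))
        + 8 * ((if i = j then (1:ℝ) else 0) * (if j = k then (1:ℝ) else 0)))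
      = (d : ℝ) + 2 * ((if i = j then (1:ℝ) else 0) * d + 1 + 1)
        + 8 * (if i = j then (1:ℝ) else 0) := by
    intro i j
    by_cases hij : i = j <;>
      simp [hij, Finset.sum_add_distrib, ← Finset.mul_sum, Finset.sum_ite_eq] <;> ring
  have hj : ∀ i : Fin d, ∑ j : Fin d, ((d : ℝ) + 2 * ((if i = j then (1:ℝ) else 0) * d + 1 + 1)
        + 8 * (if i = j then (1:ℝ) else 0))
      = (d : ℝ) ^ 2 + 6 * d + 8 := by
    intro i
    have key : ∀ j : Fin d, ((d : ℝ) + 2 * ((if i = j then (1:ℝ) else 0) * d + 1 + 1)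
        + 8 * (if i = j then (1:ℝ) else 0))
        = ((d : ℝ) + 4) + (if i = j then 2 * (d:ℝ) + 8 else 0) := by
      intro j; by_cases h : i = j <;> simp [h] <;> ring
    rw [Finset.sum_congr rfl fun j _ => key j, Finset.sum_add_distrib]
    simp [Finset.sum_ite_eq]
    ring
  have h1 : ∀ i : Fin d, ∫ x : Fin d → ℝ, ∑ j, ∑ k, x i ^ 2 * x j ^ 2 * x k ^ 2 ∂(piGauss d)
      = (d : ℝ) ^ 2 + 6 * d + 8 := by
    intro i
    rw [integral_finset_sum _ fun j _ => integrable_finset_sum _ fun k _ =>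
      integrable_mono3 i j k 2 2 2]
    rw [Finset.sum_congr rfl fun j _ => ?_, hj i]
    rw [integral_finset_sum _ fun k _ => integrable_mono3 i j k 2 2 2,
      Finset.sum_congr rfl fun k _ => integral_sq_sq_sq i j k, hk i j]
  rw [Finset.sum_congr rfl fun i _ => h1 i]
  simp
  ring

lemma integrable_inner_sq_mul (v : Fin d → ℝ) :
    Integrable (fun x : Fin d → ℝ => (∑ i, v i * x i) ^ 2 * ∑ j, x j ^ 2) (piGauss d) := by
  have h : ∀ x : Fin d → ℝ, (∑ i, v i * x i) ^ 2 * ∑ j, x j ^ 2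
      = ∑ i, ∑ k, ∑ j, (v i * v k) * (x i * x k * x j ^ 2) := by
    intro x
    rw [sq, Finset.sum_mul_sum, Finset.sum_mul]
    refine Finset.sum_congr rfl fun i _ => ?_
    rw [Finset.sum_mul]
    refine Finset.sum_congr rfl fun k _ => ?_
    rw [Finset.mul_sum]
    exact Finset.sum_congr rfl fun j _ => by ring
  simp only [h]
  exact integrable_finset_sum _ fun i _ => integrable_finset_sum _ fun k _ =>
    integrable_finset_sum _ fun j _ => by
      simpa using (integrable_mono3 i k j 1 1 2).const_mul (v i * v k)

lemma integral_inner_sq_mul (v : Fin d → ℝ) :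
    ∫ x : Fin d → ℝ, (∑ i, v i * x i) ^ 2 * ∑ j, x j ^ 2 ∂(piGauss d)
      = ((d : ℝ) + 2) * ∑ i, v i ^ 2 := by
  have h : ∀ x : Fin d → ℝ, (∑ i, v i * x i) ^ 2 * ∑ j, x j ^ 2
      = ∑ i, ∑ k, ∑ j, (v i * v k) * (x i * x k * x j ^ 2) := by
    intro x
    rw [sq, Finset.sum_mul_sum, Finset.sum_mul]
    refine Finset.sum_congr rfl fun i _ => ?_
    rw [Finset.sum_mul]
    refine Finset.sum_congr rfl fun k _ => ?_
    rw [Finset.mul_sum]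
    exact Finset.sum_congr rfl fun j _ => by ring
  simp only [h]
  have hint : ∀ (i k j : Fin d),
      Integrable (fun x : Fin d → ℝ => (v i * v k) * (x i * x k * x j ^ 2)) (piGauss d) :=
    fun i k j => by simpa using (integrable_mono3 i k j 1 1 2).const_mul (v i * v k)
  rw [integral_finset_sum _ fun i _ => integrable_finset_sum _ fun k _ =>
    integrable_finset_sum _ fun j _ => hint i k j]
  have h2 : ∀ i : Fin d, ∫ x : Fin d → ℝ, ∑ k, ∑ j, (v i * v k) * (x i * x k * x j ^ 2)
      ∂(piGauss d) = ∑ k : Fin d, ∑ j : Fin d, (v i * v k) *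
        (if i = k then (1 + 2 * (if i = j then (1:ℝ) else 0)) else 0) := by
    intro i
    rw [integral_finset_sum _ fun k _ => integrable_finset_sum _ fun j _ => hint i k j]
    refine Finset.sum_congr rfl fun k _ => ?_
    rw [integral_finset_sum _ fun j _ => hint i k j]
    refine Finset.sum_congr rfl fun j _ => ?_
    rw [integral_const_mul, integral_lin_lin_sq i k j]
  simp only [h2]
  have h3 : ∀ i : Fin d, ∑ k : Fin d, ∑ j : Fin d, (v i * v k) *
      (if i = k then (1 + 2 * (if i = j then (1:ℝ) else 0)) else 0)
      = v i ^ 2 * ((d : ℝ) + 2) := by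
    intro i
    rw [Finset.sum_comm]
    have : ∀ j : Fin d, ∑ k : Fin d, (v i * v k) *
        (if i = k then (1 + 2 * (if i = j then (1:ℝ) else 0)) else 0)
        = v i ^ 2 * (1 + 2 * (if i = j then (1:ℝ) else 0)) := by
      intro j
      rw [Finset.sum_eq_single i (fun k _ hk => by simp [Ne.symm hk]) (by simp)]
      simp [sq]
    rw [Finset.sum_congr rfl fun j _ => this j, ← Finset.mul_sum, sum_one_add_two_ite]
  simp only [h3, ← Finset.sum_mul]
  ring
end Sums

lemma pointwise_sq_bound (A B C s L β ε : ℝ) (hL : 0 ≤ L) (hβ : 0 < β) (hε : 0 ≤ ε)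
    (hs : 0 ≤ s) (hBb : |B| ≤ L * β / 2 * s) (hCb : |C| ≤ 2 * (ε / β)) :
    (A + B + C) ^ 2 * s
      ≤ 2 * (A ^ 2 * s) + L ^ 2 * β ^ 2 / 2 * s ^ 3 + 4 * (L * ε) * s ^ 2
        + 8 * (ε / β) ^ 2 * s := by
  have h1 : (A + B + C) ^ 2 ≤ 2 * A ^ 2 + 2 * B ^ 2 + 4 * (|B| * |C|) + 2 * C ^ 2 := by
    nlinarith [sq_nonneg (A - B - C), sq_nonneg (B - C), abs_mul B C, le_abs_self (B * C),
      sq_abs B, sq_abs C]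
  have hB2 : B ^ 2 ≤ L ^ 2 * β ^ 2 / 4 * s ^ 2 := by
    have := pow_le_pow_left₀ (abs_nonneg B) hBb 2
    rw [sq_abs] at this
    nlinarith [this]
  have hC2 : C ^ 2 ≤ 4 * (ε / β) ^ 2 := by
    have := pow_le_pow_left₀ (abs_nonneg C) hCb 2
    rw [sq_abs] at this
    nlinarith [this]
  have hBC : |B| * |C| ≤ L * ε * s := by
    have h := mul_le_mul hBb hCb (abs_nonneg C) (by positivity)
    have hcan : (L * β / 2 * s) * (2 * (ε / β)) = L * ε * s := by
      field_simp
    linarith [hcan ▸ h]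
  nlinarith [mul_le_mul_of_nonneg_right h1 hs, mul_le_mul_of_nonneg_right hB2 hs,
    mul_le_mul_of_nonneg_right hBC hs, mul_le_mul_of_nonneg_right hC2 hs]

lemma taylor_bound {E : Type*} [NormedAddCommGroup E] [InnerProductSpace ℝ E] [CompleteSpace E]
    (g : E → ℝ) (g' : E → E) (L : ℝ) (hL : 0 ≤ L)
    (hg : ∀ x, HasGradientAt g (g' x) x)
    (hlip : ∀ x y, ‖g' x - g' y‖ ≤ L * ‖x - y‖) (x y : E) :
    |g y - g x - ⟪g' x, y - x⟫| ≤ L / 2 * ‖y - x‖ ^ 2 := by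
  set v := y - x with hv
  have hcont : Continuous g' := by
    have : LipschitzWith (Real.toNNReal L) g' := LipschitzWith.of_dist_le_mul fun a b => by
      simpa [dist_eq_norm, Real.coe_toNNReal L hL] using hlip a b
    exact this.continuous
  have hpath : ∀ t : ℝ, HasDerivAt (fun t : ℝ => g (x + t • v)) ⟪g' (x + t • v), v⟫ t := by
    intro t
    have h1 : HasDerivAt (fun t : ℝ => x + t • v) v t := by
      simpa using ((hasDerivAt_id t).smul_const v).const_add x
    have h2 := (hg (x + t • v)).hasFDerivAt.comp_hasDerivAt t h1
    simpa [InnerProductSpace.toDual_apply_apply, Function.comp_def] using h2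
  have hφ : ∀ t : ℝ, HasDerivAt (fun t : ℝ => g (x + t • v) - t * ⟪g' x, v⟫)
      (⟪g' (x + t • v), v⟫ - ⟪g' x, v⟫) t := fun t =>
    (hpath t).sub (hasDerivAt_mul_const _)
  have hφ'cont : Continuous fun t : ℝ => ⟪g' (x + t • v), v⟫ - ⟪g' x, v⟫ :=
    ((hcont.comp (by continuity)).inner continuous_const).sub continuous_const
  have key : ∫ t in (0:ℝ)..1, (⟪g' (x + t • v), v⟫ - ⟪g' x, v⟫)
      = g y - g x - ⟪g' x, v⟫ := by
    rw [intervalIntegral.integral_eq_sub_of_hasDerivAt (fun t _ => hφ t)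
      (hφ'cont.intervalIntegrable 0 1)]
    simp [hv]
    ring
  rw [← key]
  have hbound : ∀ t ∈ Set.Icc (0:ℝ) 1,
      |⟪g' (x + t • v), v⟫ - ⟪g' x, v⟫| ≤ L * ‖v‖ ^ 2 * t := by
    intro t ht
    rw [← inner_sub_left]
    calc |⟪g' (x + t • v) - g' x, v⟫| ≤ ‖g' (x + t • v) - g' x‖ * ‖v‖ :=
          abs_real_inner_le_norm _ _
      _ ≤ (L * ‖(x + t • v) - x‖) * ‖v‖ := by
          gcongr
          exact hlip _ _
      _ = L * ‖v‖ ^ 2 * t := by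
          rw [add_sub_cancel_left, norm_smul, Real.norm_eq_abs, abs_of_nonneg ht.1]
          ring
  calc |∫ t in (0:ℝ)..1, (⟪g' (x + t • v), v⟫ - ⟪g' x, v⟫)|
      ≤ ∫ t in (0:ℝ)..1, |⟪g' (x + t • v), v⟫ - ⟪g' x, v⟫| :=
        intervalIntegral.abs_integral_le_integral_abs zero_le_one
    _ ≤ ∫ t in (0:ℝ)..1, L * ‖v‖ ^ 2 * t := by
        apply intervalIntegral.integral_mono_on zero_le_one
          (hφ'cont.abs.intervalIntegrable 0 1)
          ((continuous_const.mul continuous_id).intervalIntegrable 0 1)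
        exact hbound
    _ = L / 2 * ‖v‖ ^ 2 := by
        rw [intervalIntegral.integral_const_mul, integral_id]
        ring

section Transfer
variable {d : ℕ}

/-- the measurable equivalence underlying `stdGaussian`. -/
noncomputable def eqE (d : ℕ) : (Fin d → ℝ) ≃ᵐ EuclideanSpace ℝ (Fin d) :=
  (EuclideanSpace.equiv (Fin d) ℝ).symm.toHomeomorph.toMeasurableEquiv

lemma stdGaussian_eq_map : stdGaussian d = (piGauss d).map (eqE d) := rfl

lemma integral_stdGaussian (f : EuclideanSpace ℝ (Fin d) → ℝ) :
    ∫ u, f u ∂(stdGaussian d) = ∫ x, f (eqE d x) ∂(piGauss d) := by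
  rw [stdGaussian_eq_map, MeasureTheory.integral_map_equiv]

lemma integrable_stdGaussian_iff (f : EuclideanSpace ℝ (Fin d) → ℝ) :
    Integrable f (stdGaussian d) ↔ Integrable (fun x => f (eqE d x)) (piGauss d) := by
  rw [stdGaussian_eq_map, MeasureTheory.integrable_map_equiv]
  rfl

lemma norm_sq_eqE (x : Fin d → ℝ) : ‖eqE d x‖ ^ 2 = ∑ i, x i ^ 2 := by
  rw [EuclideanSpace.norm_eq, Real.sq_sqrt (by positivity)]
  simp only [Real.norm_eq_abs, sq_abs]
  rfl

lemma inner_eqE (v : EuclideanSpace ℝ (Fin d)) (x : Fin d → ℝ) :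
    ⟪v, eqE d x⟫ = ∑ i, v i * x i := by
  rw [PiLp.inner_apply]
  simp [mul_comm]
  exact Finset.sum_congr rfl fun i _ => mul_comm _ _

lemma norm_sq_eucl (v : EuclideanSpace ℝ (Fin d)) : ‖v‖ ^ 2 = ∑ i, v i ^ 2 := by
  rw [EuclideanSpace.norm_eq, Real.sq_sqrt (by positivity)]
  simp only [Real.norm_eq_abs, sq_abs]

end Transfer

lemma final_numeric (dr nv L β ε : ℝ) (hd : 0 ≤ dr) (hnv : 0 ≤ nv) (hL : 0 ≤ L)
    (hβ : 0 < β) (hε : 0 ≤ ε) :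
    2 * ((dr + 2) * nv) + L ^ 2 * β ^ 2 / 2 * (dr ^ 3 + 6 * dr ^ 2 + 8 * dr)
        + 4 * (L * ε) * (dr ^ 2 + 2 * dr) + 8 * (ε / β) ^ 2 * dr
      ≤ β ^ 2 / 2 * L ^ 2 * (dr + 6) ^ 3 + 2 * (dr + 4) * nv
        + 4 * β * (ε / β) * L * (dr + 4) ^ 2 + 8 * (ε / β) ^ 2 * dr := by
  have h4 : 4 * β * (ε / β) * L * (dr + 4) ^ 2 = 4 * (L * ε) * (dr + 4) ^ 2 := by
    field_simp
  rw [h4]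
  have q : (0:ℝ) ≤ (L * β) ^ 2 := sq_nonneg _
  nlinarith [mul_nonneg q hd, mul_nonneg (mul_nonneg q hd) hd, q,
    mul_nonneg hL hε, mul_nonneg (mul_nonneg hL hε) hd, hnv]

/-- Second moment of the noisy RGF gradient estimator
`ĝ(θ) = ((g̃(θ+βu) − g̃(θ))/β)·u`: with `ε̂ = ε/β`,
`E_u[‖ĝ(θ)‖²] ≤ (β²/2)L²(d+6)³ + 2(d+4)‖∇g(θ)‖² + 4βε̂L(d+4)² + 8ε̂²d`. -/
theorem noisy_estimator_second_moment {d : ℕ}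
    (g gt : EuclideanSpace ℝ (Fin d) → ℝ)
    (g' : EuclideanSpace ℝ (Fin d) → EuclideanSpace ℝ (Fin d)) (L β ε : ℝ)
    (hL : 0 ≤ L) (hβ : 0 < β) (hε : 0 ≤ ε)
    (hg : ∀ x, HasGradientAt g (g' x) x)
    (hlip : ∀ x y, ‖g' x - g' y‖ ≤ L * ‖x - y‖)
    (happrox : ∀ x, |gt x - g x| ≤ ε)
    (θ : EuclideanSpace ℝ (Fin d)) :
    ∫ u, ‖((gt (θ + β • u) - gt θ) / β) • u‖ ^ 2 ∂(stdGaussian d) ≤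
      β ^ 2 / 2 * L ^ 2 * ((d : ℝ) + 6) ^ 3 + 2 * ((d : ℝ) + 4) * ‖g' θ‖ ^ 2
        + 4 * β * (ε / β) * L * ((d : ℝ) + 4) ^ 2 + 8 * (ε / β) ^ 2 * d := by
  have hβ' : β ≠ 0 := ne_of_gt hβ
  set v : EuclideanSpace ℝ (Fin d) := g' θ with hv
  set F : EuclideanSpace ℝ (Fin d) → ℝ := fun u =>
    2 * (⟪v, u⟫ ^ 2 * ‖u‖ ^ 2) + L ^ 2 * β ^ 2 / 2 * ((‖u‖ ^ 2) ^ 3)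
      + 4 * (L * ε) * ((‖u‖ ^ 2) ^ 2) + 8 * (ε / β) ^ 2 * (‖u‖ ^ 2) with hF
  -- pointwise bound
  have hptwise : ∀ u, ‖((gt (θ + β • u) - gt θ) / β) • u‖ ^ 2 ≤ F u := by
    intro u
    set A : ℝ := ⟪v, u⟫ with hA
    set B : ℝ := (g (θ + β • u) - g θ - ⟪v, (θ + β • u) - θ⟫) / β with hB
    set C : ℝ := ((gt (θ + β • u) - g (θ + β • u)) - (gt θ - g θ)) / β with hC
    have hsub : (θ + β • u) - θ = β • u := add_sub_cancel_left θ (β • u)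
    have hinner : ⟪v, (θ + β • u) - θ⟫ = β * A := by
      rw [hsub, real_inner_smul_right]
    have hsum : (gt (θ + β • u) - gt θ) / β = A + B + C := by
      rw [hB, hC, hinner]
      field_simp
      ring
    have hBb : |B| ≤ L * β / 2 * ‖u‖ ^ 2 := by
      rw [hB, abs_div, abs_of_pos hβ, div_le_iff₀ hβ]
      calc |g (θ + β • u) - g θ - ⟪v, (θ + β • u) - θ⟫|
          ≤ L / 2 * ‖(θ + β • u) - θ‖ ^ 2 := taylor_bound g g' L hL hg hlip θ _
        _ = L * β / 2 * ‖u‖ ^ 2 * β := by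
            rw [hsub, norm_smul, Real.norm_eq_abs, abs_of_pos hβ, mul_pow]
            ring
    have hCb : |C| ≤ 2 * (ε / β) := by
      rw [hC, abs_div, abs_of_pos hβ, div_le_iff₀ hβ]
      calc |(gt (θ + β • u) - g (θ + β • u)) - (gt θ - g θ)|
          ≤ |gt (θ + β • u) - g (θ + β • u)| + |gt θ - g θ| := abs_sub _ _
        _ ≤ ε + ε := add_le_add (happrox _) (happrox _)
        _ = 2 * (ε / β) * β := by field_simp; ring
    have hnorm : ‖((gt (θ + β • u) - gt θ) / β) • u‖ ^ 2 = (A + B + C) ^ 2 * ‖u‖ ^ 2 := by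
      rw [norm_smul, Real.norm_eq_abs, mul_pow, sq_abs, hsum]
    rw [hnorm, hF]
    exact pointwise_sq_bound A B C (‖u‖ ^ 2) L β ε hL hβ hε (sq_nonneg _) hBb hCb
  -- integrability of pieces
  have hIa : Integrable (fun u : EuclideanSpace ℝ (Fin d) => ⟪v, u⟫ ^ 2 * ‖u‖ ^ 2)
      (stdGaussian d) := by
    rw [integrable_stdGaussian_iff]
    have := integrable_inner_sq_mul (fun i => v i) (d := d)
    apply this.congr
    filter_upwards with x
    rw [inner_eqE, norm_sq_eqE]
  have hIb : Integrable (fun u : EuclideanSpace ℝ (Fin d) => (‖u‖ ^ 2) ^ 3) (stdGaussian d) := by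
    rw [integrable_stdGaussian_iff]
    apply (integrable_sqsum_cube (d := d)).congr
    filter_upwards with x
    rw [norm_sq_eqE]
  have hIc : Integrable (fun u : EuclideanSpace ℝ (Fin d) => (‖u‖ ^ 2) ^ 2) (stdGaussian d) := by
    rw [integrable_stdGaussian_iff]
    apply (integrable_sqsum_sq (d := d)).congr
    filter_upwards with x
    rw [norm_sq_eqE]
  have hId : Integrable (fun u : EuclideanSpace ℝ (Fin d) => ‖u‖ ^ 2) (stdGaussian d) := by
    rw [integrable_stdGaussian_iff]
    apply (integrable_sqsum (d := d)).congr
    filter_upwards with x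
    rw [norm_sq_eqE]
  have hFint : Integrable F (stdGaussian d) :=
    (((hIa.const_mul 2).add ((hIb.const_mul _))).add (hIc.const_mul _)).add (hId.const_mul _)
  have hmono : ∫ u, ‖((gt (θ + β • u) - gt θ) / β) • u‖ ^ 2 ∂(stdGaussian d) ≤
      ∫ u, F u ∂(stdGaussian d) :=
    integral_mono_of_nonneg (ae_of_all _ fun u => by positivity) hFint (ae_of_all _ hptwise)
  refine hmono.trans ?_
  -- compute ∫ F
  have j1 : Integrable (fun u : EuclideanSpace ℝ (Fin d) => 2 * (⟪v, u⟫ ^ 2 * ‖u‖ ^ 2))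
      (stdGaussian d) := hIa.const_mul 2
  have j2 : Integrable (fun u : EuclideanSpace ℝ (Fin d) => L ^ 2 * β ^ 2 / 2 * ((‖u‖ ^ 2) ^ 3))
      (stdGaussian d) := hIb.const_mul _
  have j3 : Integrable (fun u : EuclideanSpace ℝ (Fin d) => 4 * (L * ε) * ((‖u‖ ^ 2) ^ 2))
      (stdGaussian d) := hIc.const_mul _
  have j4 : Integrable (fun u : EuclideanSpace ℝ (Fin d) => 8 * (ε / β) ^ 2 * (‖u‖ ^ 2))
      (stdGaussian d) := hId.const_mul _
  have j12 : Integrable (fun u : EuclideanSpace ℝ (Fin d) =>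
      2 * (⟪v, u⟫ ^ 2 * ‖u‖ ^ 2) + L ^ 2 * β ^ 2 / 2 * ((‖u‖ ^ 2) ^ 3)) (stdGaussian d) :=
    j1.add j2
  have j123 : Integrable (fun u : EuclideanSpace ℝ (Fin d) =>
      2 * (⟪v, u⟫ ^ 2 * ‖u‖ ^ 2) + L ^ 2 * β ^ 2 / 2 * ((‖u‖ ^ 2) ^ 3)
        + 4 * (L * ε) * ((‖u‖ ^ 2) ^ 2)) (stdGaussian d) := j12.add j3
  have hsplit : ∫ u, F u ∂(stdGaussian d)
      = 2 * ∫ u, ⟪v, u⟫ ^ 2 * ‖u‖ ^ 2 ∂(stdGaussian d)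
        + L ^ 2 * β ^ 2 / 2 * ∫ u, (‖u‖ ^ 2) ^ 3 ∂(stdGaussian d)
        + 4 * (L * ε) * ∫ u, (‖u‖ ^ 2) ^ 2 ∂(stdGaussian d)
        + 8 * (ε / β) ^ 2 * ∫ u, ‖u‖ ^ 2 ∂(stdGaussian d) := by
    rw [hF]
    rw [integral_add j123 j4, integral_add j12 j3, integral_add j1 j2,
      integral_const_mul, integral_const_mul, integral_const_mul, integral_const_mul]
  rw [hsplit]
  -- values
  have hva : ∫ u, ⟪v, u⟫ ^ 2 * ‖u‖ ^ 2 ∂(stdGaussian d) = ((d : ℝ) + 2) * ‖v‖ ^ 2 := by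
    rw [integral_stdGaussian]
    rw [show (fun x : Fin d → ℝ => ⟪v, eqE d x⟫ ^ 2 * ‖eqE d x‖ ^ 2)
        = fun x => (∑ i, v i * x i) ^ 2 * ∑ j, x j ^ 2 from
      funext fun x => by rw [inner_eqE, norm_sq_eqE]]
    rw [integral_inner_sq_mul, norm_sq_eucl]
  have hvb : ∫ u, (‖u‖ ^ 2) ^ 3 ∂(stdGaussian d) = (d:ℝ) ^ 3 + 6 * d ^ 2 + 8 * d := by
    rw [integral_stdGaussian]
    rw [show (fun x : Fin d → ℝ => (‖eqE d x‖ ^ 2) ^ 3) = fun x : Fin d → ℝ => (∑ i, x i ^ 2) ^ 3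
      from funext fun x => by rw [norm_sq_eqE]]
    exact integral_sqsum_cube
  have hvc : ∫ u, (‖u‖ ^ 2) ^ 2 ∂(stdGaussian d) = (d:ℝ) ^ 2 + 2 * d := by
    rw [integral_stdGaussian]
    rw [show (fun x : Fin d → ℝ => (‖eqE d x‖ ^ 2) ^ 2) = fun x : Fin d → ℝ => (∑ i, x i ^ 2) ^ 2
      from funext fun x => by rw [norm_sq_eqE]]
    exact integral_sqsum_sq
  have hvd : ∫ u, ‖u‖ ^ 2 ∂(stdGaussian d) = (d:ℝ) := by
    rw [integral_stdGaussian]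
    rw [show (fun x : Fin d → ℝ => ‖eqE d x‖ ^ 2) = fun x : Fin d → ℝ => ∑ i, x i ^ 2
      from funext fun x => by rw [norm_sq_eqE]]
    exact integral_sqsum
  rw [hva, hvb, hvc, hvd]
  have hnveq : ‖v‖ ^ 2 = ‖g' θ‖ ^ 2 := by rw [hv]
  rw [hnveq]
  exact final_numeric (d : ℝ) (‖g' θ‖ ^ 2) L β ε (Nat.cast_nonneg d) (sq_nonneg _) hL hβ hε
end

section
/- Gaussian smoothing gradient bound: if g has L-Lipschitz gradient, then for every θ, ||∇g_β(θ) − ∇g(θ)|| ≤ (βL/2)·(d+3)^{3/2}, where g_β is the Gaussian smoothing with parameter β. -/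
open MeasureTheory ProbabilityTheory RealInnerProductSpace

/-! Differentiating under the integral sign gives `∇g_β(θ) = E[∇g(θ + βu)]`: the first-order
Taylor remainder of `g` at any point is at most `L‖h‖²`, and averaging this bound over `u` shows
that the same remainder estimate holds for `g_β` with the averaged gradient. Then
`‖∇g_β(θ) - ∇g(θ)‖ ≤ E‖∇g(θ + βu) - ∇g(θ)‖ ≤ Lβ E‖u‖ ≤ Lβ (1 + d) / 2`, by `‖u‖ ≤ (1 + ‖u‖²) / 2`
and `E‖u‖² = d`; finally `1 + d ≤ (d + 3)^{3/2}`. -/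

open Filter Asymptotics
open scoped NNReal

section Integrability

variable {E : Type*} [NormedAddCommGroup E]

theorem integrable_of_norm_le_quadratic [MeasurableSpace E] [BorelSpace E]
    [SecondCountableTopology E] {μ : Measure E} [IsFiniteMeasure μ] (hμ : MemLp id 2 μ)
    {F : Type*} [NormedAddCommGroup F] {f : E → F} (hf : Continuous f) (a b c : ℝ)
    (hbound : ∀ u, ‖f u‖ ≤ a + b * ‖u‖ + c * ‖u‖ ^ 2) : Integrable f μ := by
  have hnorm : Integrable (fun u : E => ‖u‖) μ := (hμ.integrable one_le_two).norm
  have hsq : Integrable (fun u : E => ‖u‖ ^ 2) μ := hμ.integrable_norm_pow two_ne_zero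
  exact (((integrable_const a).add (hnorm.const_mul b)).add (hsq.const_mul c)).mono'
    hf.aestronglyMeasurable (Eventually.of_forall hbound)

theorem integrable_comp_add_smul_of_lipschitzWith [NormedSpace ℝ E] [MeasurableSpace E]
    [BorelSpace E] [SecondCountableTopology E] {μ : Measure E} [IsFiniteMeasure μ]
    (hμ : MemLp id 2 μ) {F : Type*} [NormedAddCommGroup F] {f : E → F} {K : ℝ≥0}
    (hf : LipschitzWith K f) (β : ℝ) (θ : E) :
    Integrable (fun u => f (θ + β • u)) μ := by
  refine integrable_of_norm_le_quadratic hμ (hf.continuous.comp (by fun_prop))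
    ‖f θ‖ (K * |β|) 0 fun u => ?_
  have := hf.norm_sub_le (θ + β • u) θ
  rw [add_sub_cancel_left, norm_smul, Real.norm_eq_abs] at this
  linarith [norm_le_norm_sub_add (f (θ + β • u)) (f θ)]

end Integrability

section Smoothing

variable {E : Type*} [NormedAddCommGroup E] [InnerProductSpace ℝ E] [CompleteSpace E]

theorem hasGradientAt_of_abs_sub_sub_inner_le {f : E → ℝ} {G x : E} {C : ℝ}
    (h : ∀ y, |f y - f x - ⟪G, y - x⟫| ≤ C * ‖y - x‖ ^ 2) : HasGradientAt f G x := by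
  rw [hasGradientAt_iff_hasFDerivAt, hasFDerivAt_iff_isLittleO_nhds_zero]
  refine IsBigO.trans_isLittleO (g := fun y : E => ‖y‖ ^ 2) ?_ (isLittleO_norm_pow_id one_lt_two)
  refine IsBigO.of_bound C (Eventually.of_forall fun y => ?_)
  simpa [InnerProductSpace.toDual_apply_apply] using h (x + y)

variable {g : E → ℝ} {g' : E → E} {K : ℝ≥0}

theorem abs_sub_sub_inner_le_of_lipschitzWith (hg : ∀ x, HasGradientAt g (g' x) x)
    (hg' : LipschitzWith K g') (x y : E) :
    |g y - g x - ⟪g' x, y - x⟫| ≤ K * ‖y - x‖ ^ 2 := by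
  have hbound : ∀ z ∈ segment ℝ x y,
      ‖InnerProductSpace.toDual ℝ E (g' z) - InnerProductSpace.toDual ℝ E (g' x)‖
        ≤ K * ‖y - x‖ := by
    rintro _ ⟨a, b, ha, hb, hab, rfl⟩
    have hzx : a • x + b • y - x = b • (y - x) := by
      rw [eq_sub_of_add_eq hab]; module
    rw [← map_sub, LinearIsometryEquiv.norm_map]
    calc ‖g' (a • x + b • y) - g' x‖ ≤ K * ‖a • x + b • y - x‖ := hg'.norm_sub_le _ _
      _ = K * (b * ‖y - x‖) := by rw [hzx, norm_smul, Real.norm_of_nonneg hb]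
      _ ≤ K * ‖y - x‖ := by gcongr; exact mul_le_of_le_one_left (norm_nonneg _) (by linarith)
  have := (convex_segment x y).norm_image_sub_le_of_norm_hasFDerivWithin_le'
    (fun z _ => (hg z).hasFDerivAt.hasFDerivWithinAt) hbound
    (left_mem_segment ℝ x y) (right_mem_segment ℝ x y)
  simpa [InnerProductSpace.toDual_apply_apply, ← Real.norm_eq_abs, sq, mul_assoc] using this

variable [MeasurableSpace E] [BorelSpace E] [SecondCountableTopology E] {μ : Measure E}

theorem integrable_comp_add_smul_of_lipschitzWith_gradient [IsFiniteMeasure μ] (hμ : MemLp id 2 μ)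
    (hg : ∀ x, HasGradientAt g (g' x) x) (hg' : LipschitzWith K g') (β : ℝ) (θ : E) :
    Integrable (fun u => g (θ + β • u)) μ := by
  have hcont : Continuous g := continuous_iff_continuousAt.2 fun x => (hg x).continuousAt
  refine integrable_of_norm_le_quadratic hμ (by fun_prop) |g θ| (‖g' θ‖ * |β|) (K * β ^ 2)
    fun u => ?_
  have hquad := abs_sub_sub_inner_le_of_lipschitzWith hg hg' θ (θ + β • u)
  have hlin : |⟪g' θ, β • u⟫| ≤ ‖g' θ‖ * |β| * ‖u‖ := by
    simpa [norm_smul, mul_assoc] using abs_real_inner_le_norm (g' θ) (β • u)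
  rw [add_sub_cancel_left, norm_smul, Real.norm_eq_abs, mul_pow, sq_abs] at hquad
  rw [Real.norm_eq_abs]
  linarith [abs_sub_abs_le_abs_sub (g (θ + β • u)) (g θ),
    abs_sub_abs_le_abs_sub (g (θ + β • u) - g θ) ⟪g' θ, β • u⟫]

theorem hasGradientAt_integral_comp_add_smul [IsProbabilityMeasure μ] (hμ : MemLp id 2 μ)
    (hg : ∀ x, HasGradientAt g (g' x) x) (hg' : LipschitzWith K g') (β : ℝ) (θ : E) :
    HasGradientAt (fun x => ∫ u, g (x + β • u) ∂μ) (∫ u, g' (θ + β • u) ∂μ) θ := by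
  refine hasGradientAt_of_abs_sub_sub_inner_le (C := K) fun x => ?_
  have hgx := integrable_comp_add_smul_of_lipschitzWith_gradient hμ hg hg' β x
  have hgθ := integrable_comp_add_smul_of_lipschitzWith_gradient hμ hg hg' β θ
  have hg'θ := integrable_comp_add_smul_of_lipschitzWith hμ hg' β θ
  have hinner : ⟪∫ u, g' (θ + β • u) ∂μ, x - θ⟫ = ∫ u, ⟪g' (θ + β • u), x - θ⟫ ∂μ := by
    simp_rw [real_inner_comm (x - θ)]
    exact (integral_inner hg'θ _).symm
  rw [hinner, ← integral_sub hgx hgθ, ← integral_sub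
    (f := fun u => g (x + β • u) - g (θ + β • u)) (hgx.sub hgθ) (hg'θ.inner_const _),
    ← Real.norm_eq_abs]
  refine (norm_integral_le_of_norm_le_const (C := K * ‖x - θ‖ ^ 2)
    (ae_of_all _ fun u => ?_)).trans_eq (by simp)
  simpa [add_sub_add_right_eq_sub] using
    abs_sub_sub_inner_le_of_lipschitzWith hg hg' (θ + β • u) (x + β • u)

theorem norm_integral_comp_add_smul_sub_le [IsProbabilityMeasure μ] (hμ : MemLp id 2 μ)
    (hg' : LipschitzWith K g') (β : ℝ) (θ : E) :
    ‖∫ u, g' (θ + β • u) ∂μ - g' θ‖ ≤ K * |β| * ∫ u, ‖u‖ ∂μ := by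
  calc ‖∫ u, g' (θ + β • u) ∂μ - g' θ‖ = ‖∫ u, (g' (θ + β • u) - g' θ) ∂μ‖ := by
        rw [integral_sub (integrable_comp_add_smul_of_lipschitzWith hμ hg' β θ)
          (integrable_const _), integral_const, probReal_univ, one_smul]
    _ ≤ ∫ u, K * |β| * ‖u‖ ∂μ := by
        refine norm_integral_le_of_norm_le
          (((hμ.integrable one_le_two).norm).const_mul _) (ae_of_all _ fun u => ?_)
        simpa [norm_smul, mul_assoc] using hg'.norm_sub_le (θ + β • u) θ
    _ = K * |β| * ∫ u, ‖u‖ ∂μ := integral_const_mul _ _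

end Smoothing

section Gaussian

theorem integral_sq_gaussianReal (m : ℝ) (v : ℝ≥0) :
    ∫ x, x ^ 2 ∂gaussianReal m v = m ^ 2 + v := by
  have := variance_eq_sub (memLp_id_gaussianReal (μ := m) (v := v) 2)
  simp only [Pi.pow_apply, id] at this
  rw [variance_id_gaussianReal, integral_id_gaussianReal] at this
  linarith

theorem stdGaussian_eq_stdGaussian (d : ℕ) :
    stdGaussian d = ProbabilityTheory.stdGaussian (EuclideanSpace ℝ (Fin d)) :=
  map_pi_eq_stdGaussian

instance (d : ℕ) : IsGaussian (stdGaussian d) := by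
  rw [stdGaussian_eq_stdGaussian]; infer_instance

theorem integral_norm_sq_stdGaussian_s18 (d : ℕ) : ∫ u, ‖u‖ ^ 2 ∂stdGaussian d = d := by
  rw [_root_.stdGaussian, integral_map (by fun_prop) (by fun_prop)]
  simp_rw [EuclideanSpace.real_norm_sq_eq]
  rw [integral_finsetSum _ fun i _ => ?_]
  · have (i : Fin d) : ∫ x : Fin d → ℝ, x i ^ 2 ∂Measure.pi (fun _ => gaussianReal 0 1) = 1 := by
      refine (integral_comp_eval (μ := fun _ : Fin d => gaussianReal 0 1) (i := i)
        (f := fun y : ℝ => y ^ 2) (by fun_prop)).trans ?_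
      rw [integral_sq_gaussianReal]
      simp
    simp [this]
  exact integrable_comp_eval (μ := fun _ : Fin d => gaussianReal 0 1)
    (f := fun y : ℝ => y ^ 2) (memLp_id_gaussianReal 2).integrable_sq

theorem integral_norm_stdGaussian_le_s18 (d : ℕ) : ∫ u, ‖u‖ ∂stdGaussian d ≤ (1 + d) / 2 := by
  have hsq : Integrable (fun u => ‖u‖ ^ 2) (stdGaussian d) :=
    IsGaussian.memLp_two_id.integrable_norm_pow two_ne_zero
  calc ∫ u, ‖u‖ ∂stdGaussian d ≤ ∫ u, (1 + ‖u‖ ^ 2) / 2 ∂stdGaussian d := by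
        refine integral_mono IsGaussian.integrable_id.norm
          (((integrable_const 1).add hsq).div_const 2) fun u => ?_
        nlinarith [sq_nonneg (‖u‖ - 1)]
    _ = (1 + d) / 2 := by
        rw [integral_div, integral_add (integrable_const 1) hsq, integral_norm_sq_stdGaussian_s18]
        simp

end Gaussian

/-- Gaussian smoothing gradient bound: if `g` has `L`-Lipschitz gradient,
then `‖∇g_β(θ) − ∇g(θ)‖ ≤ (βL/2)(d+3)^{3/2}`. -/
theorem gaussSmooth_gradient_close {d : ℕ}
    (g : EuclideanSpace ℝ (Fin d) → ℝ)
    (g' : EuclideanSpace ℝ (Fin d) → EuclideanSpace ℝ (Fin d)) (L β : ℝ)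
    (hL : 0 ≤ L) (hβ : 0 < β)
    (hg : ∀ x, HasGradientAt g (g' x) x)
    (hlip : ∀ x y, ‖g' x - g' y‖ ≤ L * ‖x - y‖)
    (θ : EuclideanSpace ℝ (Fin d)) :
    ‖gradient (gaussSmooth g β) θ - g' θ‖ ≤
      β * L / 2 * ((d : ℝ) + 3) ^ ((3 : ℝ) / 2) := by
  lift L to ℝ≥0 using hL
  have hg' : LipschitzWith L g' :=
    LipschitzWith.of_dist_le_mul fun x y => by simpa only [dist_eq_norm] using hlip x y
  have hgrad : HasGradientAt (gaussSmooth g β) (∫ u, g' (θ + β • u) ∂stdGaussian d) θ :=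
    hasGradientAt_integral_comp_add_smul IsGaussian.memLp_two_id hg hg' β θ
  have hd : 1 + (d : ℝ) ≤ ((d : ℝ) + 3) ^ ((3 : ℝ) / 2) := by
    have h1 : (1 : ℝ) ≤ d + 3 := by norm_cast; omega
    calc 1 + (d : ℝ) ≤ ((d : ℝ) + 3) ^ (1 : ℝ) := by rw [Real.rpow_one]; linarith
      _ ≤ _ := Real.rpow_le_rpow_of_exponent_le h1 (by norm_num)
  rw [hgrad.gradient]
  calc _ ≤ L * |β| * ∫ u, ‖u‖ ∂stdGaussian d :=
        norm_integral_comp_add_smul_sub_le IsGaussian.memLp_two_id hg' β θ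
    _ ≤ β * L / 2 * (1 + d) := by
        rw [abs_of_pos hβ]
        linarith [mul_le_mul_of_nonneg_left (integral_norm_stdGaussian_le_s18 d)
          (by positivity : (0 : ℝ) ≤ L * β)]
    _ ≤ β * L / 2 * ((d : ℝ) + 3) ^ ((3 : ℝ) / 2) := by gcongr
end
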